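/- arXiv:2303.14678 — 4 statements merged into one kernel-verified Lean document; each statement's English description precedes it below -/
import Mathlib

section
/- For every Markov policy g, every time k ≤ T and every state x, the value of the policy is dominated by the dynamic-programming value function: V^g k x ≤ V* k x. -/
open scoped BigOperators

/-- The value `V^g k x` of a Markov policy `g`, defined by backward recursion:
`V^g k x = J x` for `k ≥ T`, and for `k < T`,
`V^g k x = (∑ y, ((P k x (g k x)) y).toReal * V^g (k+1) y) - L k (g k x)`. -/
noncomputable def polVal {S A : Type*} [Fintype S] (T : ℕ)
    (P : ℕ → S → A → PMF S) (L : ℕ → A → ℝ) (J : S → ℝ) (g : ℕ → S → A) :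
    ℕ → S → ℝ
  | k, x =>
    if _h : k < T then
      (∑ y : S, ((P k x (g k x)) y).toReal * polVal T P L J g (k + 1) y) - L k (g k x)
    else J x
  termination_by k _ => T - k
  decreasing_by omega

/-- The optimal (dynamic-programming) value function `V* : ℕ → S → ℝ`:
`V* k x = J x` for `k ≥ T`, and for `k < T`,
`V* k x = ⨆ a : A, ((∑ y, ((P k x a) y).toReal * V* (k+1) y) - L k a)`,
the maximum over the finite nonempty type `A`. -/
noncomputable def optVal {S A : Type*} [Fintype S] [Fintype A] [Nonempty A] (T : ℕ)
    (P : ℕ → S → A → PMF S) (L : ℕ → A → ℝ) (J : S → ℝ) :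
    ℕ → S → ℝ
  | k, x =>
    if _h : k < T then
      ⨆ a : A, ((∑ y : S, ((P k x a) y).toReal * optVal T P L J (k + 1) y) - L k a)
    else J x
  termination_by k _ => T - k
  decreasing_by omega

/-- For every Markov policy `g`, every time `k ≤ T` and every state `x`, the value of the
policy is dominated by the dynamic-programming value function: `V^g k x ≤ V* k x`. -/
theorem policy_value_le_optimal_value
    {S A : Type*} [Fintype S] [Nonempty S] [Fintype A] [Nonempty A] (T : ℕ)
    (P : ℕ → S → A → PMF S) (L : ℕ → A → ℝ) (J : S → ℝ)
    (g : ℕ → S → A) :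
    ∀ k ≤ T, ∀ x : S, polVal T P L J g k x ≤ optVal T P L J k x := by
  suffices h : ∀ n, ∀ k, T - k ≤ n → ∀ x : S,
      polVal T P L J g k x ≤ optVal T P L J k x by
    intro k _ x; exact h (T - k) k le_rfl x
  intro n
  induction n with
  | zero =>
    intro k hk x
    rw [polVal, optVal, dif_neg (by omega), dif_neg (by omega)]
  | succ n ih =>
    intro k hk x
    by_cases h : k < T
    · rw [polVal, optVal, dif_pos h, dif_pos h]
      have hle : (∑ y : S, ((P k x (g k x)) y).toReal * polVal T P L J g (k + 1) y)
          - L k (g k x)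
          ≤ (∑ y : S, ((P k x (g k x)) y).toReal * optVal T P L J (k + 1) y)
          - L k (g k x) := by
        apply sub_le_sub_right
        apply Finset.sum_le_sum
        intro y _
        exact mul_le_mul_of_nonneg_left (ih (k + 1) (by omega) y) ENNReal.toReal_nonneg
      refine hle.trans (le_ciSup (f := fun a : A =>
        (∑ y : S, ((P k x a) y).toReal * optVal T P L J (k + 1) y) - L k a)
        (Set.Finite.bddAbove (Set.finite_range _)) (g k x))
    · rw [polVal, optVal, dif_neg h, dif_neg h]
end

section
/- If a policy g* is greedy with respect to the dynamic-programming value function, i.e. for every k < T and every state x the action g* k x attains the maximum over a : A of (Σ_{y : S} ((P k x a) y).toReal * V* (k+1) y) − L k a, then V^{g*} k x = V* k x for all k ≤ T and all states x; in particular the greedy policy is optimal. -/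
open scoped BigOperators

/-- If a policy `g*` is greedy with respect to the dynamic-programming value function,
i.e. for every `k < T` and every state `x` the action `g* k x` attains the maximum over
`a : A` of `(∑ y, ((P k x a) y).toReal * V* (k+1) y) - L k a`, then
`V^{g*} k x = V* k x` for all `k ≤ T` and all states `x`. -/
theorem greedy_policy_is_optimal
    {S A : Type*} [Fintype S] [Nonempty S] [Fintype A] [Nonempty A] (T : ℕ)
    (P : ℕ → S → A → PMF S) (L : ℕ → A → ℝ) (J : S → ℝ)
    (gstar : ℕ → S → A)
    (hgreedy : ∀ k < T, ∀ x : S,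
      (∑ y : S, ((P k x (gstar k x)) y).toReal * optVal T P L J (k + 1) y) - L k (gstar k x)
        = ⨆ a : A, ((∑ y : S, ((P k x a) y).toReal * optVal T P L J (k + 1) y) - L k a)) :
    ∀ k ≤ T, ∀ x : S, polVal T P L J gstar k x = optVal T P L J k x := by
  suffices h : ∀ n k, T - k ≤ n → ∀ x : S,
      polVal T P L J gstar k x = optVal T P L J k x by
    exact fun k _ x => h T k (by omega) x
  intro n
  induction n with
  | zero =>
    intro k hk x
    rw [polVal, optVal]
    rw [dif_neg (by omega), dif_neg (by omega)]
  | succ n ih =>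
    intro k hk x
    by_cases hkT : k < T
    · rw [polVal, optVal]
      rw [dif_pos hkT, dif_pos hkT]
      have hrw : ∀ y : S, polVal T P L J gstar (k + 1) y = optVal T P L J (k + 1) y :=
        fun y => ih (k + 1) (by omega) y
      simp only [hrw]
      exact hgreedy k hkT x
    · rw [polVal, optVal]
      rw [dif_neg hkT, dif_neg hkT]
end

section
/- The dynamic-programming value function is the maximum of the policy values, and the maximum is attained: for every k ≤ T and every state x, V* k x = ⨆ over policies g : ℕ → S → A of V^g k x, and there exists a single policy g such that V^g k x = V* k x simultaneously for all k ≤ T and all x. -/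
open scoped BigOperators

/-- The dynamic-programming value function is the maximum of the policy values, and the
maximum is attained: for every `k ≤ T` and every state `x`,
`V* k x = ⨆ g, V^g k x`, and there is a single policy `g` with `V^g k x = V* k x`
simultaneously for all `k ≤ T` and all `x`. -/
theorem optimal_value_eq_iSup_policy_value_and_attained
    {S A : Type*} [Fintype S] [Nonempty S] [Fintype A] [Nonempty A] (T : ℕ)
    (P : ℕ → S → A → PMF S) (L : ℕ → A → ℝ) (J : S → ℝ) :
    (∀ k ≤ T, ∀ x : S,
        optVal T P L J k x = ⨆ g : ℕ → S → A, polVal T P L J g k x) ∧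
    (∃ g : ℕ → S → A, ∀ k ≤ T, ∀ x : S,
        polVal T P L J g k x = optVal T P L J k x) := by
  classical
  have hexA : ∀ k (x : S), ∃ a : A, ∀ b : A,
      (∑ y : S, ((P k x b) y).toReal * optVal T P L J (k + 1) y) - L k b ≤
      (∑ y : S, ((P k x a) y).toReal * optVal T P L J (k + 1) y) - L k a :=
    fun k x => Finite.exists_max _
  choose g hg using hexA
  have hle : ∀ g' : ℕ → S → A, ∀ n k, T - k = n → ∀ x : S,
      polVal T P L J g' k x ≤ optVal T P L J k x := by
    intro g' n
    induction n with
    | zero =>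
      intro k hk x
      rw [polVal, optVal]
      simp [show ¬ k < T by omega]
    | succ n ih =>
      intro k hk x
      have hkT : k < T := by omega
      rw [polVal, optVal, dif_pos hkT, dif_pos hkT]
      calc (∑ y : S, ((P k x (g' k x)) y).toReal * polVal T P L J g' (k + 1) y)
              - L k (g' k x)
          ≤ (∑ y : S, ((P k x (g' k x)) y).toReal * optVal T P L J (k + 1) y)
              - L k (g' k x) := by
            apply sub_le_sub_right
            apply Finset.sum_le_sum
            intro y _
            exact mul_le_mul_of_nonneg_left (ih (k + 1) (by omega) y)
              ENNReal.toReal_nonneg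
        _ ≤ ⨆ a : A, ((∑ y : S, ((P k x a) y).toReal * optVal T P L J (k + 1) y)
              - L k a) :=
            le_ciSup (f := fun a : A => (∑ y : S, ((P k x a) y).toReal * optVal T P L J (k + 1) y) - L k a) (Set.finite_range _).bddAbove (g' k x)
  have hopt : ∀ n k, T - k = n → ∀ x : S,
      polVal T P L J g k x = optVal T P L J k x := by
    intro n
    induction n with
    | zero =>
      intro k hk x
      rw [polVal, optVal]
      simp [show ¬ k < T by omega]
    | succ n ih =>
      intro k hk x
      have hkT : k < T := by omega
      rw [polVal, optVal, dif_pos hkT, dif_pos hkT]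
      have hrec : ∀ y : S, polVal T P L J g (k + 1) y = optVal T P L J (k + 1) y :=
        ih (k + 1) (by omega)
      simp only [hrec]
      exact le_antisymm (le_ciSup (f := fun a : A => (∑ y : S, ((P k x a) y).toReal * optVal T P L J (k + 1) y) - L k a) (Set.finite_range _).bddAbove (g k x))
        (ciSup_le (fun a => hg k x a))
  refine ⟨fun k _ x => ?_, ⟨g, fun k _ x => hopt (T - k) k rfl x⟩⟩
  refine le_antisymm ?_ (ciSup_le (fun g' => hle g' (T - k) k rfl x))
  rw [← hopt (T - k) k rfl x]
  exact le_ciSup ⟨optVal T P L J k x, by rintro _ ⟨g', rfl⟩; exact hle g' (T - k) k rfl x⟩ g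
end

section
/- The recursively defined policy value equals the expected total reward along the controlled Markov chain: for every policy g, every k ≤ T and every state x, V^g k x = (Σ_{z : S} ((μ k T x) z).toReal * J z) − Σ_{j = k}^{T−1} Σ_{z : S} ((μ k j x) z).toReal * L j (g j z), where the time-j marginal distributions μ are defined by μ k k x = PMF.pure x and μ k (j+1) x = (μ k j x).bind (fun y => P j y (g j y)) for k ≤ j < T. -/
open scoped BigOperators

/-- The time-`j` marginal distribution `μ k j x` of the controlled Markov chain started
at time `k` in state `x` under policy `g`: `μ k k x = PMF.pure x` and
`μ k (j+1) x = (μ k j x).bind (fun y => P j y (g j y))` for `j ≥ k`. -/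
noncomputable def marginal {S A : Type*}
    (P : ℕ → S → A → PMF S) (g : ℕ → S → A) (k : ℕ) (x : S) : ℕ → PMF S
  | 0 => PMF.pure x
  | j + 1 =>
    if k ≤ j then (marginal P g k x j).bind (fun y => P j y (g j y))
    else PMF.pure x

lemma marginal_self {S A : Type*} (P : ℕ → S → A → PMF S) (g : ℕ → S → A) (k : ℕ) (x : S) :
    marginal P g k x k = PMF.pure x := by
  cases k with
  | zero => simp [marginal]
  | succ j => simp [marginal, Nat.not_succ_le_self]

lemma marginal_bind {S A : Type*} (P : ℕ → S → A → PMF S) (g : ℕ → S → A)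
    {k j : ℕ} (h : k < j) (x : S) :
    marginal P g k x j = (P k x (g k x)).bind (fun y => marginal P g (k+1) y j) := by
  induction j with
  | zero => omega
  | succ j ih =>
    rcases Nat.lt_or_ge k j with h' | h'
    · have e1 : marginal P g k x (j+1) = (marginal P g k x j).bind (fun y => P j y (g j y)) := by
        simp [marginal, Nat.le_of_lt h']
      rw [e1, ih h', PMF.bind_bind]
      congr 1
      funext y
      have h2 : k + 1 ≤ j := h'
      simp [marginal, h2]
    · have hkj : k = j := by omega
      subst hkj
      simp [marginal, marginal_self, PMF.pure_bind, PMF.bind_pure]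

lemma toReal_bind_apply {S : Type*} [Fintype S] (p : PMF S) (f : S → PMF S) (z : S) :
    ((p.bind f) z).toReal = ∑ y : S, (p y).toReal * ((f y) z).toReal := by
  rw [PMF.bind_apply, tsum_fintype, ENNReal.toReal_sum]
  · exact Finset.sum_congr rfl fun y _ => ENNReal.toReal_mul
  · intro y _
    exact ENNReal.mul_ne_top (p.apply_ne_top y) ((f y).apply_ne_top z)

/-- The recursively defined policy value equals the expected total reward along the
controlled Markov chain: for every policy `g`, every `k ≤ T` and state `x`,
`V^g k x = (∑ z, ((μ k T x) z).toReal * J z) - ∑ j in [k, T), ∑ z, ((μ k j x) z).toReal * L j (g j z)`. -/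
theorem policy_value_eq_expected_total_reward
    {S A : Type*} [Fintype S] [Nonempty S] [Fintype A] [Nonempty A] (T : ℕ)
    (P : ℕ → S → A → PMF S) (L : ℕ → A → ℝ) (J : S → ℝ) (g : ℕ → S → A) :
    ∀ k ≤ T, ∀ x : S,
      polVal T P L J g k x
        = (∑ z : S, ((marginal P g k x T) z).toReal * J z)
          - ∑ j ∈ Finset.Ico k T, ∑ z : S, ((marginal P g k x j) z).toReal * L j (g j z) := by
  suffices h : ∀ d k, T - k = d → k ≤ T →
      ∀ x : S, polVal T P L J g k x
        = (∑ z : S, ((marginal P g k x T) z).toReal * J z)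
          - ∑ j ∈ Finset.Ico k T, ∑ z : S, ((marginal P g k x j) z).toReal * L j (g j z) by
    intro k hk x
    exact h (T - k) k rfl hk x
  intro d
  induction d with
  | zero =>
    intro k hd hk x
    have hkT : k = T := by omega
    subst hkT
    rw [polVal]
    rw [dif_neg (lt_irrefl _)]
    rw [marginal_self]
    simp only [PMF.pure_apply, apply_ite ENNReal.toReal, ENNReal.toReal_one,
      ENNReal.toReal_zero, ite_mul, one_mul, zero_mul, Finset.sum_ite_eq',
      Finset.mem_univ, if_true, Finset.Ico_self, Finset.sum_empty, sub_zero]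
    rw [Finset.sum_eq_single_of_mem x (Finset.mem_univ x) (fun b _ hb => if_neg hb), if_pos rfl]
  | succ d ih =>
    intro k hd hk x
    have hk' : k < T := by omega
    have ihy : ∀ y : S, polVal T P L J g (k+1) y
        = (∑ z : S, ((marginal P g (k+1) y T) z).toReal * J z)
          - ∑ j ∈ Finset.Ico (k+1) T, ∑ z : S, ((marginal P g (k+1) y j) z).toReal * L j (g j z) :=
      fun y => ih (k+1) (by omega) (by omega) y
    have key : ∑ y : S, ((P k x (g k x)) y).toReal * polVal T P L J g (k+1) y
        = (∑ z : S, ((marginal P g k x T) z).toReal * J z)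
          - ∑ j ∈ Finset.Ico (k+1) T, ∑ z : S, ((marginal P g k x j) z).toReal * L j (g j z) := by
      simp only [ihy, mul_sub]
      rw [Finset.sum_sub_distrib]
      congr 1
      · simp only [Finset.mul_sum]
        rw [Finset.sum_comm]
        refine Finset.sum_congr rfl fun z _ => ?_
        rw [marginal_bind P g hk' x, toReal_bind_apply, Finset.sum_mul]
        exact Finset.sum_congr rfl fun y _ => (mul_assoc _ _ _).symm
      · simp only [Finset.mul_sum]
        rw [Finset.sum_comm]
        refine Finset.sum_congr rfl fun j hj => ?_
        rw [Finset.sum_comm]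
        refine Finset.sum_congr rfl fun z _ => ?_
        have hkj : k < j := (Finset.mem_Ico.mp hj).1
        rw [marginal_bind P g hkj x, toReal_bind_apply, Finset.sum_mul]
        exact Finset.sum_congr rfl fun y _ => (mul_assoc _ _ _).symm
    have hpure : ∑ z : S, ((marginal P g k x k) z).toReal * L k (g k z) = L k (g k x) := by
      simp only [marginal_self, PMF.pure_apply, apply_ite ENNReal.toReal, ENNReal.toReal_one,
        ENNReal.toReal_zero, ite_mul, one_mul, zero_mul, Finset.sum_ite_eq',
        Finset.mem_univ, if_true]
      rw [Finset.sum_eq_single_of_mem x (Finset.mem_univ x) (fun b _ hb => if_neg hb), if_pos rfl]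
    rw [polVal]
    rw [dif_pos hk', key, Finset.sum_eq_sum_Ico_succ_bot hk', hpure]
    ring
end
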